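/- arXiv:2011.00266 — 7 statements merged into one kernel-verified Lean document; each statement's English description precedes it below -/
import Mathlib

section
/- Let f : X → X be a homeomorphism of a compact metric space and let N be a positive integer. If the proximal cell P_f(x) = {y ∈ X : inf_{n ∈ ℤ} d(fⁿ(x), fⁿ(y)) = 0} has at most N points for every x ∈ X, then for every integer k, the proximal cell P_{f^k}(x) also has at most N points for every x ∈ X. -/
open Set Metric

variable {X Y : Type*}

/-- The proximal cell of `x` for `f`: points `y` with `inf_n d(f^n x, f^n y) = 0`. -/
def proxCell [MetricSpace X] (f : Equiv.Perm X) (x : X) : Set X :=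
  {y | ∀ ε > 0, ∃ n : ℤ, dist ((f ^ n) x) ((f ^ n) y) < ε}

/-- `f` is `N`-distal if every proximal cell has at most `N` points. -/
def NDistal [MetricSpace X] (f : Equiv.Perm X) (N : ℕ) : Prop :=
  ∀ x : X, (proxCell f x).encard ≤ N

/-- Minimal pairwise distance of a set. -/
noncomputable def minDist [MetricSpace X] (B : Set X) : ℝ :=
  sInf {r | ∃ x ∈ B, ∃ y ∈ B, x ≠ y ∧ r = dist x y}

/-- The `N`-diameter of `A` (sup over subsets with `N+1` elements of the minimal
pairwise distance; `sSup ∅ = 0` in `ℝ`). -/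
noncomputable def diamN [MetricSpace X] (N : ℕ) (A : Set X) : ℝ :=
  sSup {r | ∃ B : Set X, B ⊆ A ∧ B.encard = N + 1 ∧ r = minDist B}

/-- `R_δ(x) = {y : d(f^i y, f^i x) < δ for some i ∈ ℤ}`. -/
def Rball [MetricSpace X] (f : Equiv.Perm X) (δ : ℝ) (x : X) : Set X :=
  {y | ∃ i : ℤ, dist ((f ^ i) y) ((f ^ i) x) < δ}

/-- The `δ`-dynamical ball `Γ_δ(x)`. -/
def dynBall [MetricSpace X] (f : Equiv.Perm X) (δ : ℝ) (x : X) : Set X :=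
  {y | ∀ n : ℤ, dist ((f ^ n) x) ((f ^ n) y) < δ}

theorem stmt0 [MetricSpace X] [CompactSpace X]
    (f : Equiv.Perm X) (hf : Continuous f) (hf' : Continuous f.symm)
    (N : ℕ) (hN : 0 < N) (h : NDistal f N) (k : ℤ) :
    NDistal (f ^ k) N := by
  intro x
  refine le_trans (Set.encard_mono ?_) (h x)
  intro y hy ε hε
  obtain ⟨n, hn⟩ := hy ε hε
  exact ⟨k * n, by rwa [zpow_mul]⟩
end

section
/- Let f : X → X be an N-distal homeomorphism and g : Y → Y an M-distal homeomorphism on compact metric spaces X and Y. Then the product homeomorphism f × g : X × Y → X × Y, with the max metric d²((x₁,y₁),(x₂,y₂)) = max{d_X(x₁,x₂), d_Y(y₁,y₂)}, is MN-distal. -/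
open Set Metric

variable {X Y : Type*}

namespace Equiv.Perm

def prodCongrHom : Perm X × Perm Y →* Perm (X × Y) where
  toFun p := p.1.prodCongr p.2
  map_one' := rfl
  map_mul' _ _ := rfl

theorem prodCongr_zpow (f : Perm X) (g : Perm Y) (n : ℤ) :
    f.prodCongr g ^ n = (f ^ n).prodCongr (g ^ n) :=
  (map_zpow prodCongrHom (f, g) n).symm

end Equiv.Perm

theorem proxCell_prodCongr_subset [MetricSpace X] [MetricSpace Y] (f : Equiv.Perm X)
    (g : Equiv.Perm Y) (p : X × Y) :
    proxCell (f.prodCongr g) p ⊆ proxCell f p.1 ×ˢ proxCell g p.2 := by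
  intro q hq
  simp only [proxCell, Equiv.Perm.prodCongr_zpow, Equiv.prodCongr_apply, Prod.dist_eq,
    Prod.map_fst, Prod.map_snd, max_lt_iff] at hq
  exact ⟨fun ε hε ↦ (hq ε hε).imp fun _ ↦ And.left, fun ε hε ↦ (hq ε hε).imp fun _ ↦ And.right⟩

theorem NDistal.prodCongr [MetricSpace X] [MetricSpace Y] {f : Equiv.Perm X} {g : Equiv.Perm Y}
    {N M : ℕ} (hf : NDistal f N) (hg : NDistal g M) : NDistal (f.prodCongr g) (N * M) := fun p ↦
  calc (proxCell (f.prodCongr g) p).encard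
      ≤ (proxCell f p.1).encard * (proxCell g p.2).encard :=
        encard_prod ▸ encard_le_encard (proxCell_prodCongr_subset f g p)
    _ ≤ N * M := mul_le_mul' (hf p.1) (hg p.2)
    _ = (N * M : ℕ) := (Nat.cast_mul N M).symm

theorem stmt2_general [MetricSpace X] [MetricSpace Y]
    (f : Equiv.Perm X)
    (g : Equiv.Perm Y)
    (N M : ℕ)
    (hfd : NDistal f N) (hgd : NDistal g M) :
    NDistal (Equiv.prodCongr f g) (M * N) :=
  mul_comm N M ▸ hfd.prodCongr hgd

theorem stmt2 [MetricSpace X] [CompactSpace X] [MetricSpace Y] [CompactSpace Y]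
    (f : Equiv.Perm X) (hf : Continuous f) (hf' : Continuous f.symm)
    (g : Equiv.Perm Y) (hg : Continuous g) (hg' : Continuous g.symm)
    (N M : ℕ) (hN : 0 < N) (hM : 0 < M)
    (hfd : NDistal f N) (hgd : NDistal g M) :
    NDistal (Equiv.prodCongr f g) (M * N) :=
  stmt2_general f g N M hfd hgd
end

section
/- If A is a nonempty connected subset of a compact metric space X and N is a positive integer, then diam(A)/N ≤ diam_N(A). -/
open Set Metric

variable {X Y : Type*}

/-!
Given `a, b ∈ A` at distance `d > 0`, the function `dist a ·` is continuous on the connected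
set `A`, so by the intermediate value theorem it takes each value `k * d / N`, `0 ≤ k ≤ N`.
Points at distances `j * d / N ≠ k * d / N` from `a` are at least `d / N` apart, so they form
an `(N + 1)`-point subset of `A` with minimal distance `≥ d / N`; hence `d ≤ N * diamN N A`.
-/

open Bornology

section

variable [MetricSpace X]

lemma minDist_nonneg (B : Set X) : 0 ≤ minDist B :=
  Real.sInf_nonneg fun _ ⟨_, _, _, _, _, hr⟩ => hr ▸ dist_nonneg

lemma minDist_le_dist {B : Set X} {x y : X} (hx : x ∈ B) (hy : y ∈ B) (hxy : x ≠ y) :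
    minDist B ≤ dist x y :=
  csInf_le ⟨0, fun _ ⟨_, _, _, _, _, hr⟩ => hr ▸ dist_nonneg⟩ ⟨x, hx, y, hy, hxy, rfl⟩

lemma le_minDist {B : Set X} (hB : B.Nontrivial) {r : ℝ}
    (h : ∀ x ∈ B, ∀ y ∈ B, x ≠ y → r ≤ dist x y) : r ≤ minDist B := by
  obtain ⟨x, hx, y, hy, hxy⟩ := hB
  refine le_csInf ⟨dist x y, x, hx, y, hy, hxy, rfl⟩ ?_
  rintro _ ⟨x, hx, y, hy, hxy, rfl⟩
  exact h x hx y hy hxy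

lemma minDist_le_diam {B : Set X} (hB : IsBounded B) : minDist B ≤ diam B := by
  rcases B.subsingleton_or_nontrivial with hsub | ⟨x, hx, y, hy, hxy⟩
  · have hempty : {r | ∃ x ∈ B, ∃ y ∈ B, x ≠ y ∧ r = dist x y} = ∅ :=
      eq_empty_of_forall_notMem fun _ ⟨x, hx, y, hy, hxy, _⟩ => hxy (hsub hx hy)
    rw [minDist, hempty, Real.sInf_empty]
    exact diam_nonneg
  · exact (minDist_le_dist hx hy hxy).trans (dist_le_diam_of_mem hB hx hy)

lemma diamN_nonneg (N : ℕ) (A : Set X) : 0 ≤ diamN N A :=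
  Real.sSup_nonneg fun _ ⟨B, _, _, hr⟩ => hr ▸ minDist_nonneg B

lemma minDist_le_diamN {N : ℕ} {A B : Set X} (hA : IsBounded A) (hBA : B ⊆ A)
    (hB : B.encard = N + 1) : minDist B ≤ diamN N A := by
  refine le_csSup ⟨diam A, ?_⟩ ⟨B, hBA, hB, rfl⟩
  rintro _ ⟨B', hB'A, -, rfl⟩
  exact (minDist_le_diam (hA.subset hB'A)).trans (diam_mono hB'A hA)

lemma le_dist_of_dist_eq_natCast_mul {a x y : X} {s : ℝ} (hs : 0 ≤ s) {j k : ℕ}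
    (hjk : j ≠ k) (hx : dist a x = j * s) (hy : dist a y = k * s) : s ≤ dist x y := by
  have hjk' : (1 : ℝ) ≤ |(j : ℝ) - k| := by
    have : (1 : ℤ) ≤ |(j : ℤ) - k| := Int.one_le_abs (sub_ne_zero.2 (by exact_mod_cast hjk))
    exact_mod_cast this
  calc s ≤ |(j : ℝ) - k| * s := le_mul_of_one_le_left hs hjk'
    _ = |dist x a - dist y a| := by
      rw [dist_comm x, dist_comm y, hx, hy, ← sub_mul, abs_mul, abs_of_nonneg hs]
    _ ≤ dist x y := abs_dist_sub_le x y a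

lemma IsPreconnected.exists_dist_eq {A : Set X} (hA : IsPreconnected A)
    {a b : X} (ha : a ∈ A) (hb : b ∈ A) {t : ℝ} (ht₀ : 0 ≤ t) (ht : t ≤ dist a b) :
    ∃ x ∈ A, dist a x = t := by
  have hivt := hA.intermediate_value ha hb (f := dist a)
    (continuous_const.dist continuous_id).continuousOn
  exact hivt ⟨(dist_self a).symm ▸ ht₀, ht⟩

lemma IsPreconnected.exists_encard_eq_div_le_minDist {A : Set X}
    (hA : IsPreconnected A) {a b : X} (ha : a ∈ A) (hb : b ∈ A) (hab : a ≠ b) {N : ℕ}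
    (hN : 0 < N) : ∃ B ⊆ A, B.encard = N + 1 ∧ dist a b / N ≤ minDist B := by
  set s := dist a b / N
  have hs : 0 < s := div_pos (dist_pos.2 hab) (Nat.cast_pos.2 hN)
  have hpoints : ∀ k : Fin (N + 1), ∃ x ∈ A, dist a x = k * s := fun k =>
    hA.exists_dist_eq ha hb (by positivity) <| by
      calc (k : ℝ) * s ≤ N * s := by gcongr; exact_mod_cast k.is_le
        _ = dist a b := mul_div_cancel₀ _ (Nat.cast_pos.2 hN).ne'
  choose g hgA hg using hpoints
  have hsep : ∀ j k, j ≠ k → s ≤ dist (g j) (g k) := fun j k hjk =>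
    le_dist_of_dist_eq_natCast_mul hs.le (Fin.val_ne_of_ne hjk) (hg j) (hg k)
  have hinj : g.Injective := fun j k h => by
    by_contra hjk
    have := hsep j k hjk
    rw [h, dist_self] at this
    exact this.not_gt hs
  have hcard : (range g).encard = N + 1 := by
    rw [← image_univ, hinj.encard_image, encard_univ, ENat.card_eq_coe_fintype_card,
      Fintype.card_fin, Nat.cast_succ]
  refine ⟨range g, range_subset_iff.2 hgA, hcard, le_minDist ?_ ?_⟩
  · rw [← one_lt_encard_iff_nontrivial, hcard]
    exact_mod_cast Nat.lt_add_of_pos_left hN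
  · rintro _ ⟨j, rfl⟩ _ ⟨k, rfl⟩ hne
    exact hsep j k (ne_of_apply_ne g hne)

end

theorem stmt8_general [MetricSpace X] [CompactSpace X]
    (N : ℕ) (hN : 0 < N) (A : Set X) (hAc : IsConnected A) :
    Metric.diam A / N ≤ diamN N A := by
  have hNpos : (0 : ℝ) < N := Nat.cast_pos.2 hN
  rw [div_le_iff₀ hNpos]
  refine diam_le_of_forall_dist_le (mul_nonneg (diamN_nonneg N A) hNpos.le)
    fun a ha b hb => ?_
  rcases eq_or_ne a b with rfl | hab
  · rw [dist_self]
    exact mul_nonneg (diamN_nonneg N A) hNpos.le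
  obtain ⟨B, hBA, hB, hdist⟩ :=
    hAc.isPreconnected.exists_encard_eq_div_le_minDist ha hb hab hN
  rw [← div_le_iff₀ hNpos]
  exact hdist.trans (minDist_le_diamN isBounded_of_compactSpace hBA hB)

theorem stmt8 [MetricSpace X] [CompactSpace X]
    (N : ℕ) (hN : 0 < N) (A : Set X) (hA : A.Nonempty) (hAc : IsConnected A) :
    Metric.diam A / N ≤ diamN N A :=
  stmt8_general N hN A hAc
end

section
/- Every N-equicontinuous homeomorphism of a compact metric space is N-distal: if for every ε > 0 there exists δ > 0 with diam_N(fⁿ(R_δ(x))) < ε for all x ∈ X and n ∈ ℤ, then the proximal cell P_f(x) has at most N elements for every x ∈ X. -/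
open Set Metric

variable {X Y : Type*}

theorem stmt11 [MetricSpace X] [CompactSpace X]
    (f : Equiv.Perm X) (hf : Continuous f) (hf' : Continuous f.symm)
    (N : ℕ) (hN : 0 < N)
    (heq : ∀ ε > (0 : ℝ), ∃ δ > (0 : ℝ), ∀ (x : X) (n : ℤ),
      diamN N ((fun y => (f ^ n) y) '' (Rball f δ x)) < ε) :
    NDistal f N := by
  intro x
  by_contra h
  push_neg at h
  obtain ⟨B, hBsub, hBcard⟩ :=
    Set.exists_subset_encard_eq (Order.add_one_le_of_lt h)
  have hBfin : B.Finite := Set.finite_of_encard_eq_coe (k := N + 1) (by exact_mod_cast hBcard)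
  -- the set of pairwise distances
  set S : Set ℝ := {r | ∃ a ∈ B, ∃ b ∈ B, a ≠ b ∧ r = dist a b} with hS
  have hSfin : S.Finite := by
    have : S ⊆ (fun p : X × X => dist p.1 p.2) '' (B ×ˢ B) := by
      rintro r ⟨a, ha, b, hb, hab, rfl⟩
      exact ⟨(a, b), ⟨ha, hb⟩, rfl⟩
    exact ((hBfin.prod hBfin).image _).subset this
  have hSne : S.Nonempty := by
    have h2 : (1 : ℕ∞) < B.encard := by
      rw [hBcard]
      exact_mod_cast Nat.lt_succ_of_le (by exact_mod_cast hN)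
    obtain ⟨a, b, ha, hb, hab⟩ := Set.one_lt_encard_iff.mp h2
    exact ⟨dist a b, a, ha, b, hb, hab, rfl⟩
  have hmem : minDist B ∈ S := hSne.csInf_mem hSfin
  obtain ⟨a, ha, b, hb, hab, hEq⟩ := hmem
  have hε : 0 < minDist B := by rw [hEq]; exact dist_pos.mpr hab
  obtain ⟨δ, hδ, hδε⟩ := heq (minDist B) hε
  -- B ⊆ Rball f δ x
  have hBR : B ⊆ Rball f δ x := by
    intro y hy
    obtain ⟨n, hn⟩ := hBsub hy δ hδ
    exact ⟨n, by rwa [dist_comm]⟩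
  have himg : (fun y => (f ^ (0 : ℤ)) y) '' (Rball f δ x) = Rball f δ x := by
    simp [zpow_zero]
  -- boundedness of the diamN set
  have hBdd : BddAbove {r | ∃ B' : Set X, B' ⊆ Rball f δ x ∧ B'.encard = (N : ℕ∞) + 1
      ∧ r = minDist B'} := by
    refine ⟨Metric.diam (Set.univ : Set X), ?_⟩
    rintro r ⟨B', _, hB'card, rfl⟩
    have h2 : (1 : ℕ∞) < B'.encard := by
      rw [hB'card]
      exact_mod_cast Nat.lt_succ_of_le (by exact_mod_cast hN)
    obtain ⟨a', b', ha', hb', hab'⟩ := Set.one_lt_encard_iff.mp h2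
    have hle : minDist B' ≤ dist a' b' := by
      apply csInf_le
      · exact ⟨0, by rintro r ⟨u, _, v, _, _, rfl⟩; exact dist_nonneg⟩
      · exact ⟨a', ha', b', hb', hab', rfl⟩
    exact hle.trans (Metric.dist_le_diam_of_mem isCompact_univ.isBounded trivial trivial)
  have hkey := hδε x 0
  rw [himg] at hkey
  have hle : minDist B ≤ diamN N (Rball f δ x) :=
    le_csSup hBdd ⟨B, hBR, hBcard, rfl⟩
  exact absurd (hle.trans_lt hkey) (lt_irrefl _)
end

section
/- Let f be a homeomorphism of a compact metric space X. Then f is equicontinuous (for all ε > 0 there is δ > 0 such that d(x,y) < δ implies d(fⁿ(x), fⁿ(y)) < ε for all n ∈ ℤ) if and only if for all ε > 0 there is δ > 0 such that diam(fⁿ(R_δ(x))) < ε for all x ∈ X and n ∈ ℤ. -/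
open Set Metric

variable {X Y : Type*}

theorem stmt12 [MetricSpace X] [CompactSpace X]
    (f : Equiv.Perm X) (hf : Continuous f) (hf' : Continuous f.symm) :
    (∀ ε > (0 : ℝ), ∃ δ > (0 : ℝ), ∀ x y : X, dist x y < δ →
      ∀ n : ℤ, dist ((f ^ n) x) ((f ^ n) y) < ε) ↔
    (∀ ε > (0 : ℝ), ∃ δ > (0 : ℝ), ∀ (x : X) (n : ℤ),
      Metric.diam ((fun y => (f ^ n) y) '' (Rball f δ x)) < ε) := by
  constructor
  · intro h ε hε
    obtain ⟨δ, hδ, hδ'⟩ := h (ε/3) (by linarith)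
    refine ⟨δ, hδ, fun x n => ?_⟩
    have key : ∀ y ∈ Rball f δ x, dist ((f ^ n) y) ((f ^ n) x) ≤ ε/3 := by
      rintro y ⟨i, hi⟩
      have := hδ' _ _ hi (n - i)
      rw [← Equiv.Perm.mul_apply, ← Equiv.Perm.mul_apply, ← zpow_add, sub_add_cancel] at this
      linarith
    have : Metric.diam ((fun y => (f ^ n) y) '' (Rball f δ x)) ≤ 2 * (ε/3) := by
      apply Metric.diam_le_of_forall_dist_le (by linarith)
      rintro a ⟨y, hy, rfl⟩ b ⟨z, hz, rfl⟩
      calc dist ((f ^ n) y) ((f ^ n) z)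
          ≤ dist ((f ^ n) y) ((f ^ n) x) + dist ((f ^ n) x) ((f ^ n) z) := dist_triangle _ _ _
        _ ≤ ε/3 + ε/3 := by
            have h1 := key y hy
            have h2 := key z hz
            rw [dist_comm] at h2
            linarith
        _ = 2 * (ε/3) := by ring
    linarith
  · intro h ε hε
    obtain ⟨δ, hδ, hδ'⟩ := h ε hε
    refine ⟨δ, hδ, fun x y hxy n => ?_⟩
    have hx : x ∈ Rball f δ x := ⟨0, by simpa using hδ⟩
    have hy : y ∈ Rball f δ x := ⟨0, by simpa [dist_comm] using hxy⟩
    have hb : Bornology.IsBounded ((fun y => (f ^ n) y) '' (Rball f δ x)) :=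
      (isCompact_univ.isBounded).subset (subset_univ _)
    calc dist ((f ^ n) x) ((f ^ n) y)
        ≤ Metric.diam ((fun y => (f ^ n) y) '' (Rball f δ x)) :=
          Metric.dist_le_diam_of_mem hb ⟨x, hx, rfl⟩ ⟨y, hy, rfl⟩
      _ < ε := hδ' x n
end

section
/- Let f : X → X be an N-distal homeomorphism of a compact metric space with N ≥ 2. Every periodic point of f is a distal point, i.e., if f^T(x) = x for some T ≥ 1, then P_f(x) = {x}. -/
open Set Metric

variable {X Y : Type*}

private lemma comp_zpow [MetricSpace X] (f : Equiv.Perm X) (a b : ℤ) (z : X) :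
    (f ^ a) ((f ^ b) z) = (f ^ (a + b)) z := by
  rw [zpow_add]; rfl

theorem stmt15 [MetricSpace X] [CompactSpace X]
    (f : Equiv.Perm X) (hf : Continuous f) (hf' : Continuous f.symm)
    (N : ℕ) (hN : 2 ≤ N) (h : NDistal f N)
    (x : X) (T : ℕ) (hT : 1 ≤ T) (hx : (f ^ T) x = x) :
    proxCell f x = {x} := by
  ext y
  simp only [mem_singleton_iff]
  constructor
  · intro hy
    by_contra hne
    -- x is fixed by every power k*T
    have hxT : ∀ k : ℕ, (f ^ ((k * T : ℕ) : ℤ)) x = x := by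
      intro k
      induction k with
      | zero => simp
      | succ k ih =>
        have : ((k + 1) * T : ℕ) = (k * T : ℕ) + T := by ring
        rw [this, Nat.cast_add, ← comp_zpow f ((k * T : ℕ) : ℤ) ((T : ℕ) : ℤ) x,
          zpow_natCast f T, hx]
        exact ih
    -- every f^{kT} y is in the proximal cell of x
    have hmem : ∀ k : ℕ, (f ^ ((k * T : ℕ) : ℤ)) y ∈ proxCell f x := by
      intro k ε hε
      obtain ⟨n, hn⟩ := hy ε hε
      refine ⟨n - (k * T : ℕ), ?_⟩
      rw [comp_zpow, sub_add_cancel]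
      have hxeq : (f ^ (n - ((k * T : ℕ) : ℤ))) x = (f ^ n) x := by
        conv_rhs => rw [show (n : ℤ) = n - (k * T : ℕ) + (k * T : ℕ) by ring,
          ← comp_zpow, hxT k]
      rw [hxeq]; exact hn
    -- the proximal cell is finite
    have hfin : (proxCell f x).Finite := by
      rw [← Set.encard_lt_top_iff]
      exact lt_of_le_of_lt (h x) (WithTop.coe_lt_top N)
    haveI : Finite (proxCell f x) := hfin.to_subtype
    obtain ⟨a, b, hab, heq⟩ := Finite.exists_ne_map_eq_of_infinite
      (fun k : ℕ => (⟨(f ^ ((k * T : ℕ) : ℤ)) y, hmem k⟩ : proxCell f x))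
    have heq' : (f ^ ((a * T : ℕ) : ℤ)) y = (f ^ ((b * T : ℕ) : ℤ)) y :=
      congrArg Subtype.val heq
    -- main argument: a < b with equal images gives a contradiction
    have key : ∀ a b : ℕ, a < b →
        (f ^ ((a * T : ℕ) : ℤ)) y = (f ^ ((b * T : ℕ) : ℤ)) y → False := by
      intro a b hab heq
      set m : ℕ := (b - a) * T with hm_def
      have hm : 1 ≤ m := Nat.one_le_iff_ne_zero.mpr (by
        simp [hm_def, Nat.sub_eq_zero_iff_le, not_le, hab]
        omega)
      have hmz : ((m : ℕ) : ℤ) = ((b * T : ℕ) : ℤ) - ((a * T : ℕ) : ℤ) := by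
        push_cast [Nat.cast_sub hab.le, hm_def]
        ring
      -- y has period m
      have hy_per : (f ^ ((m : ℕ) : ℤ)) y = y := by
        have := congrArg (fun z => (f ^ (-(((a * T : ℕ) : ℤ)))) z) heq
        rw [comp_zpow, comp_zpow, neg_add_cancel, zpow_zero] at this
        rw [hmz, show ((b * T : ℕ) : ℤ) - ((a * T : ℕ) : ℤ)
          = -((a * T : ℕ) : ℤ) + ((b * T : ℕ) : ℤ) by ring]
        simp only [Equiv.Perm.one_apply] at this
        exact this.symm
      have hx_per : (f ^ ((m : ℕ) : ℤ)) x = x := by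
        have := hxT (b - a)
        rwa [hm_def]
      -- fixed by all multiples of m
      have hfixz : ∀ z : X, (f ^ ((m : ℕ) : ℤ)) z = z →
          ∀ q : ℤ, (f ^ (((m : ℕ) : ℤ) * q)) z = z := by
        intro z hz q
        rw [zpow_mul]
        exact (Function.IsFixedPt.perm_zpow hz q)
      -- minimal distance over one period
      have hmne : (Finset.range m).Nonempty := Finset.nonempty_range_iff.mpr
        (Nat.one_le_iff_ne_zero.mp hm)
      set ε : ℝ := (Finset.range m).inf' hmne
        (fun r => dist ((f ^ (r : ℤ)) x) ((f ^ (r : ℤ)) y)) with hε_def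
      have hεpos : 0 < ε := by
        rw [hε_def, Finset.lt_inf'_iff]
        intro r _
        exact dist_pos.mpr fun hc => (Ne.symm hne) ((f ^ (r : ℤ)).injective hc)
      obtain ⟨n, hn⟩ := hy ε hεpos
      have hmpos : (0 : ℤ) < (m : ℤ) := by exact_mod_cast hm
      have hr0 : 0 ≤ n % (m : ℤ) := Int.emod_nonneg n (by omega)
      have hrm : n % (m : ℤ) < (m : ℤ) := Int.emod_lt_of_pos n hmpos
      have hsplit : ∀ z : X, (f ^ ((m : ℕ) : ℤ)) z = z →
          (f ^ n) z = (f ^ (n % (m : ℤ))) z := by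
        intro z hz
        conv_lhs => rw [show n = n % (m : ℤ) + (m : ℤ) * (n / (m : ℤ))
          from (Int.emod_add_mul_ediv n (m : ℤ)).symm]
        rw [← comp_zpow, hfixz z hz]
      rw [hsplit x hx_per, hsplit y hy_per] at hn
      -- but ε is a lower bound for this distance
      have hle : ε ≤ dist ((f ^ (n % (m : ℤ))) x) ((f ^ (n % (m : ℤ))) y) := by
        have hmem' : (n % (m : ℤ)).toNat ∈ Finset.range m := by
          rw [Finset.mem_range]
          omega
        have := Finset.inf'_le
          (fun r : ℕ => dist ((f ^ (r : ℤ)) x) ((f ^ (r : ℤ)) y)) hmem'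
        rwa [Int.toNat_of_nonneg hr0] at this
      linarith
    rcases lt_or_gt_of_ne hab with hlt | hlt
    · exact key a b hlt heq'
    · exact key b a hlt heq'.symm
  · rintro rfl
    intro ε hε
    exact ⟨0, by simpa using hε⟩
end

section
/- Let f : X → X be a pointwise transitive N-distal homeomorphism of a compact metric space which is not distal. Then either X itself is a single periodic orbit, or f has no periodic points. -/
open Set Metric

variable {X Y : Type*}

lemma compz (f : Equiv.Perm X) (a b : ℤ) (x : X) :
    (f ^ a) ((f ^ b) x) = (f ^ (a + b)) x := by
  rw [zpow_add]; rfl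

lemma fixz (f : Equiv.Perm X) (p : X) (T : ℕ) (hp : (f ^ T) p = p)
    (m : ℤ) (hm : (T : ℤ) ∣ m) : (f ^ m) p = p := by
  obtain ⟨j, rfl⟩ := hm
  have hst : (f ^ T : Equiv.Perm X) ∈ MulAction.stabilizer (Equiv.Perm X) p := hp
  have : (f ^ ((T : ℤ) * j)) ∈ MulAction.stabilizer (Equiv.Perm X) p := by
    rw [zpow_mul, zpow_natCast]
    exact Subgroup.zpow_mem _ hst j
  exact this

theorem stmt16 [MetricSpace X] [CompactSpace X]
    (f : Equiv.Perm X) (hf : Continuous f) (hf' : Continuous f.symm)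
    (N : ℕ) (hN : 0 < N) (h : NDistal f N)
    (htrans : ∃ x : X, Dense (Set.range fun n : ℤ => (f ^ n) x))
    (hnotdistal : ¬ ∀ x : X, proxCell f x = {x}) :
    (∃ p : X, ∃ T : ℕ, 1 ≤ T ∧ (f ^ T) p = p ∧
        (Set.range fun n : ℤ => (f ^ n) p) = Set.univ) ∨
    (∀ p : X, ∀ T : ℕ, 1 ≤ T → (f ^ T) p ≠ p) := by
  by_cases hper : ∃ p : X, ∃ T : ℕ, 1 ≤ T ∧ (f ^ T) p = p
  · obtain ⟨p, T, hT, hp⟩ := hper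
    obtain ⟨x, hx⟩ := htrans
    left
    have hchoice : ∀ k : ℕ, ∃ n : ℤ, dist ((f ^ n) x) p < 1 / (k + 1) := by
      intro k
      have hpos : (0:ℝ) < 1 / (k+1) := by positivity
      obtain ⟨y, hy, hdy⟩ := hx.exists_dist_lt p hpos
      obtain ⟨n, rfl⟩ := hy
      exact ⟨n, by rwa [dist_comm]⟩
    choose n hn using hchoice
    haveI : NeZero T := ⟨by omega⟩
    obtain ⟨s, hs⟩ := Finite.exists_infinite_fiber (fun k : ℕ => ((n k : ZMod T)))
    have hsinf : {k : ℕ | ((n k : ZMod T)) = s}.Infinite := by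
      rw [← Set.infinite_coe_iff]
      exact hs
    obtain ⟨k0, hk0⟩ := hsinf.nonempty
    obtain ⟨q, hqdef⟩ : ∃ q : X, q = (f ^ (-(n k0))) p := ⟨_, rfl⟩
    have hdvd : ∀ k ∈ {k : ℕ | ((n k : ZMod T)) = s}, (T:ℤ) ∣ n k - n k0 := by
      intro k hk
      have h0 : ((n k - n k0 : ℤ) : ZMod T) = 0 := by
        push_cast
        rw [hk, hk0]; ring
      exact (ZMod.intCast_zmod_eq_zero_iff_dvd _ _).mp h0
    have hqk : ∀ k ∈ {k : ℕ | ((n k : ZMod T)) = s}, (f ^ (n k)) q = p := by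
      intro k hk
      rw [hqdef, compz]
      exact fixz f p T hp _ (by simpa [sub_eq_add_neg] using hdvd k hk)
    have hq_per : ∀ m : ℤ, (T:ℤ) ∣ m → (f ^ m) q = q := by
      intro m hm
      rw [hqdef, compz, add_comm, ← compz, fixz f p T hp m hm]
    have hprox : ∀ ε > 0, ∃ m : ℤ, dist ((f ^ m) x) ((f ^ m) q) < ε := by
      intro ε hε
      obtain ⟨K, hK⟩ := exists_nat_one_div_lt hε
      obtain ⟨k, hk, hkK⟩ := hsinf.exists_gt K
      refine ⟨n k, ?_⟩
      rw [hqk k hk]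
      calc dist ((f ^ n k) x) p < 1/(k+1) := hn k
        _ ≤ 1/(K+1) := by
            apply one_div_le_one_div_of_le (by positivity)
            have : (K:ℝ) ≤ k := by exact_mod_cast hkK.le
            linarith
        _ < ε := hK
    have hsub : ∀ m : ℤ, (f ^ (m * (T:ℤ))) x ∈ proxCell f q := by
      intro m ε hε
      obtain ⟨m', hm'⟩ := hprox ε hε
      refine ⟨m' - m * T, ?_⟩
      rw [compz]
      have h1 : (f ^ (m' - m*(T:ℤ))) q = (f ^ m') q := by
        conv_rhs => rw [show m' = (m' - m*(T:ℤ)) + (m*T) by ring, ← compz,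
          hq_per (m*(T:ℤ)) ⟨m, by ring⟩]
      rw [h1, show m' - m*(T:ℤ) + m*T = m' by ring, dist_comm]
      exact hm'
    have hfin : (proxCell f q).Finite := by
      rw [← Set.encard_lt_top_iff]
      exact lt_of_le_of_lt (h q) (WithTop.coe_lt_top N)
    have hnotinj : ¬ Function.Injective (fun m : ℤ => (f ^ (m * (T:ℤ))) x) := by
      intro hinj
      exact (Set.infinite_range_of_injective hinj)
        (hfin.subset (Set.range_subset_iff.mpr hsub))
    obtain ⟨m, m', heq, hne⟩ := Function.not_injective_iff.mp hnotinj
    have hper1 : (f ^ ((m - m') * (T:ℤ))) x = x := by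
      have h2 := congrArg (fun y => (f ^ (-(m' * (T:ℤ)))) y) heq
      rwa [compz, compz, show -(m'*(T:ℤ)) + m*T = (m-m')*T by ring,
        show -(m'*(T:ℤ)) + m'*T = 0 by ring, zpow_zero, Equiv.Perm.one_apply] at h2
    have hper2 : (f ^ (-((m - m') * (T:ℤ)))) x = x := by
      have h3 := congrArg (fun y => (f ^ (-((m - m') * (T:ℤ)))) y) hper1
      rw [compz, show -((m-m')*(T:ℤ)) + (m-m')*T = 0 by ring, zpow_zero,
        Equiv.Perm.one_apply] at h3
      exact h3.symm
    set d := m - m' with hddef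
    have hd : d ≠ 0 := sub_ne_zero.mpr hne
    have hdabs : d.natAbs ≠ 0 := Int.natAbs_ne_zero.mpr hd
    set T' : ℕ := d.natAbs * T with hT'def
    have hT'pos : 0 < T' := Nat.mul_pos (Nat.pos_of_ne_zero hdabs) hT
    have hxper : (f ^ T') x = x := by
      have h3 : (f ^ ((T' : ℕ) : ℤ)) x = x := by
        rcases Int.natAbs_eq d with h1 | h1
        · rw [show ((T' : ℕ) : ℤ) = d * T by rw [hT'def]; push_cast [← h1]; ring]
          exact hper1
        · rw [show ((T' : ℕ) : ℤ) = -(d * T) by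
            rw [hT'def]; push_cast [show ((d.natAbs : ℤ)) = -d by omega]; ring]
          exact hper2
      rwa [zpow_natCast] at h3
    refine ⟨x, T', hT'pos, hxper, ?_⟩
    have hfinr : (Set.range fun nn : ℤ => (f ^ nn) x).Finite := by
      apply Set.Finite.subset ((Set.finite_Icc (0:ℤ) ((T':ℤ) - 1)).image
        (fun j => (f ^ j) x))
      rintro _ ⟨nn, rfl⟩
      have hTz : (0:ℤ) < (T':ℤ) := by exact_mod_cast hT'pos
      refine ⟨nn % (T':ℤ), ⟨Int.emod_nonneg _ (by omega),
        by have := Int.emod_lt_of_pos nn hTz; omega⟩, ?_⟩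
      have hfix : (f ^ ((T':ℤ) * (nn / (T':ℤ)))) x = x :=
        fixz f x T' hxper _ ⟨_, rfl⟩
      calc (f ^ (nn % (T':ℤ))) x = (f ^ (nn % (T':ℤ))) ((f ^ ((T':ℤ) * (nn / (T':ℤ)))) x) := by
            rw [hfix]
        _ = (f ^ (nn % (T':ℤ) + (T':ℤ) * (nn / (T':ℤ)))) x := compz f _ _ x
        _ = (f ^ nn) x := by rw [add_comm, Int.mul_ediv_add_emod]
    have hclosed : IsClosed (Set.range fun nn : ℤ => (f ^ nn) x) := hfinr.isClosed
    rw [← hclosed.closure_eq]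
    exact hx.closure_eq
  · right
    push_neg at hper
    intro p T hT hpe
    exact hper p T hT hpe
end
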